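/- arXiv:2006.01530 — 3 statements merged into one kernel-verified Lean document; each statement's English description precedes it below -/
import Mathlib

section
/- Let 0 < x_n ≤ x_{n−1} ≤ … ≤ x_1 be positive reals and 1 ≤ k ≤ n−1. Then for every index i, x_1 · e_{k−1}(x with x_1 omitted) ≥ x_i · e_{k−1}(x with x_i omitted), where e_{k−1} denotes the elementary symmetric polynomial of degree k−1 in n−1 variables. -/
/-
Remove `x_1` and `x_i` from the variables and call the rest `s`. Splitting off the terms that
contain the remaining extra variable, `x_i e_{k-1}(s ∪ {x_1}) = x_i e_{k-1}(s) + x_i x_1 e_{k-2}(s)`,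
and likewise with `x_1` and `x_i` swapped; the mixed terms agree, and `x_i ≤ x_1` with
`e_{k-1}(s) ≥ 0` compares the others.
-/

/-- `k`-th elementary symmetric polynomial of `x` over the index set `s`. -/
def esymFin {n : ℕ} (s : Finset (Fin n)) (k : ℕ) (x : Fin n → ℝ) : ℝ :=
  ∑ t ∈ s.powersetCard k, ∏ i ∈ t, x i

theorem Multiset.esymm_cons_succ {R : Type*} [CommSemiring R] (a : R) (s : Multiset R) (k : ℕ) :
    (a ::ₘ s).esymm (k + 1) = s.esymm (k + 1) + a * s.esymm k := by
  simp only [esymm, powersetCard_cons, map_add, sum_add, map_map, Function.comp_def, prod_cons,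
    sum_map_mul_left]

namespace esymFin

variable {n : ℕ} {x : Fin n → ℝ}

theorem eq_esymm (s : Finset (Fin n)) (k : ℕ) : esymFin s k x = (s.val.map x).esymm k :=
  (s.esymm_map_val x k).symm

@[simp]
theorem zero (s : Finset (Fin n)) : esymFin s 0 x = 1 := by
  simp [esymFin]

theorem insert_succ {s : Finset (Fin n)} {a : Fin n} (ha : a ∉ s) (k : ℕ) :
    esymFin (insert a s) (k + 1) x = esymFin s (k + 1) x + x a * esymFin s k x := by
  simp only [eq_esymm, Finset.insert_val_of_notMem ha, Multiset.map_cons,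
    Multiset.esymm_cons_succ]

theorem nonneg {s : Finset (Fin n)} (hx : ∀ j ∈ s, 0 ≤ x j) (k : ℕ) : 0 ≤ esymFin s k x :=
  Finset.sum_nonneg fun _ ht =>
    Finset.prod_nonneg fun j hj => hx j (Finset.mem_powersetCard.mp ht |>.1 hj)

theorem mul_insert_le_mul_insert {s : Finset (Fin n)} {a b : Fin n} (ha : a ∉ s) (hb : b ∉ s)
    (hx : ∀ j ∈ s, 0 ≤ x j) (hab : x b ≤ x a) (k : ℕ) :
    x b * esymFin (insert a s) k x ≤ x a * esymFin (insert b s) k x := by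
  cases k with
  | zero => simpa using hab
  | succ k =>
    rw [insert_succ ha, insert_succ hb, mul_add, mul_add, mul_left_comm (x b)]
    gcongr
    exact nonneg hx _

theorem mul_erase_le_mul_erase {t : Finset (Fin n)} {a b : Fin n} (ha : a ∈ t) (hb : b ∈ t)
    (hx : ∀ j ∈ t, 0 ≤ x j) (hab : x b ≤ x a) (k : ℕ) :
    x b * esymFin (t.erase b) k x ≤ x a * esymFin (t.erase a) k x := by
  obtain rfl | hne := eq_or_ne a b
  · rfl
  have hta : t.erase a = insert b ((t.erase a).erase b) :=
    (Finset.insert_erase (Finset.mem_erase.2 ⟨hne.symm, hb⟩)).symm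
  have htb : t.erase b = insert a ((t.erase a).erase b) := by
    rw [Finset.erase_right_comm]
    exact (Finset.insert_erase (Finset.mem_erase.2 ⟨hne, ha⟩)).symm
  have has : a ∉ (t.erase a).erase b := by
    rw [Finset.erase_right_comm]
    exact Finset.notMem_erase a _
  rw [hta, htb]
  exact mul_insert_le_mul_insert has (Finset.notMem_erase b _)
    (fun j hj => hx j (Finset.mem_of_mem_erase (Finset.mem_of_mem_erase hj))) hab k

end esymFin

/-- For positive decreasing reals `x₁ ≥ x₂ ≥ … ≥ xₙ > 0` (indexed so that `x 0` is the
largest) and `1 ≤ k ≤ n−1`, for every `i`: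
`x₁ · e_{k−1}(x omitting x₁) ≥ x_i · e_{k−1}(x omitting x_i)`. -/
theorem stmt_7 (n : ℕ) (hn : 2 ≤ n) (x : Fin n → ℝ) (hpos : ∀ i, 0 < x i)
    (hmono : ∀ i j : Fin n, i ≤ j → x j ≤ x i)
    (k : ℕ) (i : Fin n) :
    x i * esymFin (Finset.univ.erase i) (k - 1) x ≤
      x ⟨0, by omega⟩ * esymFin (Finset.univ.erase ⟨0, by omega⟩) (k - 1) x :=
  esymFin.mul_erase_le_mul_erase (Finset.mem_univ _) (Finset.mem_univ _)
    (fun j _ => (hpos j).le) (hmono _ _ (Nat.zero_le _)) (k - 1)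
end

section
/- Let n ≥ 2, 1 ≤ ζ ≤ n−1, and c > 0. Let y_1, …, y_n be positive reals such that for every index i, (c / (2·C(n,ζ))) · e_{n−ζ}(y with y_i omitted) < 1. Then e_n(y)^{n−ζ} < (2n/(ζ·c))^n. -/
open Finset

theorem Nat.choose_mul_self_eq_mul_choose_sub {n k : ℕ} (hk : k ≤ n) :
    n.choose k * k = n * (n - 1).choose (n - k) := by
  obtain _ | j := k
  · cases n <;> simp
  obtain ⟨m, rfl⟩ : ∃ m, n = m + 1 := ⟨n - 1, by omega⟩
  rw [← Nat.add_one_mul_choose_eq, add_tsub_cancel_right, Nat.add_sub_add_right,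
    Nat.choose_symm (by omega)]

section

variable {ι : Type*}

theorem Real.prod_le_mean_pow_card (s : Finset ι) (f : ι → ℝ) (hf : ∀ i ∈ s, 0 ≤ f i) :
    ∏ i ∈ s, f i ≤ ((∑ i ∈ s, f i) / #s) ^ #s := by
  rcases s.eq_empty_or_nonempty with rfl | hs
  · simp
  have hcard : (0 : ℝ) < #s := by exact_mod_cast hs.card_pos
  have amgm := Real.geom_mean_le_arith_mean s (fun _ ↦ 1) f (fun _ _ ↦ zero_le_one)
    (by simpa using hcard) hf
  simp only [Real.rpow_one, one_mul, sum_const, nsmul_eq_mul, mul_one] at amgm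
  have hprod : 0 ≤ ∏ i ∈ s, f i := prod_nonneg hf
  calc ∏ i ∈ s, f i = ((∏ i ∈ s, f i) ^ (#s : ℝ)⁻¹) ^ #s := by
        rw [← Real.rpow_natCast, ← Real.rpow_mul hprod, inv_mul_cancel₀ hcard.ne', Real.rpow_one]
    _ ≤ _ := by gcongr

variable [DecidableEq ι] {M : Type*} [CommMonoid M]

theorem Finset.prod_prod_erase (s : Finset ι) (f : ι → M) :
    ∏ i ∈ s, ∏ j ∈ s.erase i, f j = (∏ i ∈ s, f i) ^ (#s - 1) := by
  rw [prod_comm' (t' := s) (s' := s.erase) (by aesop), ← prod_pow]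
  refine prod_congr rfl fun i hi ↦ ?_
  rw [prod_const, card_erase_of_mem hi]

theorem Finset.prod_powersetCard_prod (s : Finset ι) (d : ℕ) (f : ι → M) :
    ∏ t ∈ s.powersetCard (d + 1), ∏ i ∈ t, f i = (∏ i ∈ s, f i) ^ (#s - 1).choose d := by
  rw [prod_comm' (t' := s) (s' := fun i ↦ (s.powersetCard (d + 1)).filter ({i} ⊆ ·))
    (by intro t i; simp only [mem_filter, mem_powersetCard, singleton_subset_iff]; aesop),
    ← prod_pow]
  refine prod_congr rfl fun i hi ↦ ?_
  rw [prod_const, card_filter_powersetCard_subset _ _ _ (by simpa) (by simp), card_singleton,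
    add_tsub_cancel_right]

end

theorem Real.prod_pow_le_esymm_div_choose_pow {ι : Type*} (s : Finset ι) {d : ℕ} (hd : d ≤ #s)
    (x : ι → ℝ) (hx : ∀ i ∈ s, 0 ≤ x i) :
    (∏ i ∈ s, x i) ^ d ≤ ((∑ t ∈ s.powersetCard d, ∏ i ∈ t, x i) / (#s).choose d) ^ #s := by
  classical
  obtain _ | k := d
  · simp
  set e := ∑ t ∈ s.powersetCard (k + 1), ∏ i ∈ t, x i
  set N := (#s).choose (k + 1)
  have hN : 0 < N := Nat.choose_pos hd
  have hmean_nonneg : 0 ≤ e / N := by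
    have : 0 ≤ e := sum_nonneg fun t ht ↦ prod_nonneg fun i hi ↦
      hx i ((mem_powersetCard.mp ht).1 hi)
    positivity
  have amgm : (∏ i ∈ s, x i) ^ (#s - 1).choose k ≤ (e / N) ^ N := by
    have h := Real.prod_le_mean_pow_card (s.powersetCard (k + 1)) (fun t ↦ ∏ i ∈ t, x i)
      fun t ht ↦ prod_nonneg fun i hi ↦ hx i ((mem_powersetCard.mp ht).1 hi)
    rwa [prod_powersetCard_prod, card_powersetCard] at h
  have hexp : (#s - 1).choose k * #s = (k + 1) * N := by
    obtain ⟨m, hm⟩ : ∃ m, #s = m + 1 := ⟨#s - 1, by omega⟩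
    simp only [N, hm, add_tsub_cancel_right]
    rw [mul_comm, Nat.add_one_mul_choose_eq, mul_comm]
  refine le_of_pow_le_pow_left₀ hN.ne' (by positivity) ?_
  calc ((∏ i ∈ s, x i) ^ (k + 1)) ^ N = ((∏ i ∈ s, x i) ^ (#s - 1).choose k) ^ #s := by
        rw [← pow_mul, ← pow_mul, hexp]
    _ ≤ ((e / N) ^ N) ^ #s := by gcongr; exact pow_nonneg (prod_nonneg hx) _
    _ = ((e / N) ^ #s) ^ N := by rw [← pow_mul, ← pow_mul, mul_comm]

theorem Real.prod_pow_lt_pow_of_esymm_erase_div_choose_lt {ι : Type*} [DecidableEq ι]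
    {s : Finset ι} (hs : s.Nonempty) {d : ℕ} (hd : d ≤ #s - 1) (x : ι → ℝ)
    (hx : ∀ i ∈ s, 0 < x i) {M : ℝ}
    (h : ∀ i ∈ s, (∑ t ∈ (s.erase i).powersetCard d, ∏ j ∈ t, x j) / (#s - 1).choose d < M) :
    (∏ i ∈ s, x i) ^ d < M ^ #s := by
  obtain ⟨i₀, hi₀⟩ := hs
  obtain rfl | hd₀ := d.eq_zero_or_pos
  · have h₀ := h i₀ hi₀
    simp only [powersetCard_zero, sum_singleton, prod_empty, Nat.choose_zero_right,
      Nat.cast_one, div_one] at h₀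
    simpa using one_lt_pow₀ h₀ (card_ne_zero_of_mem hi₀)
  have hmean_nonneg (i : ι) : 0 ≤ (∑ t ∈ (s.erase i).powersetCard d, ∏ j ∈ t, x j) /
      (#s - 1).choose d :=
    div_nonneg (sum_nonneg fun t ht ↦ prod_nonneg fun j hj ↦
      (hx j (mem_of_mem_erase ((mem_powersetCard.mp ht).1 hj))).le) (Nat.cast_nonneg _)
  have hM : 0 < M := (hmean_nonneg i₀).trans_lt (h i₀ hi₀)
  have hfactor (i : ι) (hi : i ∈ s) : (∏ j ∈ s.erase i, x j) ^ d < M ^ (#s - 1) := by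
    have hcard : #(s.erase i) = #s - 1 := card_erase_of_mem hi
    have maclaurin := prod_pow_le_esymm_div_choose_pow (s.erase i) (hcard ▸ hd) x
      fun j hj ↦ (hx j (mem_of_mem_erase hj)).le
    rw [hcard] at maclaurin
    exact maclaurin.trans_lt (pow_lt_pow_left₀ (h i hi) (hmean_nonneg i) (by omega))
  have hprod := prod_lt_prod_of_nonempty
    (fun i _ ↦ pow_pos (prod_pos fun j hj ↦ hx j (mem_of_mem_erase hj)) d) hfactor ⟨i₀, hi₀⟩
  rw [prod_pow, prod_prod_erase, prod_const] at hprod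
  refine lt_of_pow_lt_pow_left₀ (#s - 1) (by positivity) ?_
  calc ((∏ i ∈ s, x i) ^ d) ^ (#s - 1) = ((∏ i ∈ s, x i) ^ (#s - 1)) ^ d := by
        rw [← pow_mul, ← pow_mul, mul_comm]
    _ < (M ^ (#s - 1)) ^ #s := hprod
    _ = (M ^ #s) ^ (#s - 1) := by rw [← pow_mul, ← pow_mul, mul_comm]

theorem esymFin_univ_self {n : ℕ} (y : Fin n → ℝ) : esymFin univ n y = ∏ i, y i := by
  simpa [esymFin] using congrArg (∑ t ∈ ·, ∏ i ∈ t, y i) (powersetCard_self (univ : Finset (Fin n)))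

theorem stmt_9_general (n ζ : ℕ) (hζ1 : 1 ≤ ζ) (hζ2 : ζ ≤ n - 1)
    (c : ℝ) (hc : 0 < c) (y : Fin n → ℝ) (hy : ∀ i, 0 < y i)
    (hcone : ∀ i : Fin n,
      c / (2 * (n.choose ζ : ℝ)) * esymFin (Finset.univ.erase i) (n - ζ) y < 1) :
    (esymFin Finset.univ n y) ^ (n - ζ) < (2 * (n : ℝ) / ((ζ : ℝ) * c)) ^ n := by
  have hd : n - ζ ≤ n - 1 := by omega
  have hζ : (0 : ℝ) < ζ := by exact_mod_cast hζ1
  have hN : (0 : ℝ) < (n - 1).choose (n - ζ) := by exact_mod_cast Nat.choose_pos hd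
  have hcard : #(univ : Finset (Fin n)) = n := by simp
  have hmean (i : Fin n) :
      esymFin (univ.erase i) (n - ζ) y / (n - 1).choose (n - ζ) < 2 * n / (ζ * c) := by
    have hchoose : (n.choose ζ : ℝ) * ζ = n * (n - 1).choose (n - ζ) := by
      exact_mod_cast Nat.choose_mul_self_eq_mul_choose_sub (by omega)
    have hC : (0 : ℝ) < n.choose ζ := by exact_mod_cast Nat.choose_pos (by omega)
    have h := hcone i
    rw [div_mul_eq_mul_div, div_lt_one (by positivity)] at h
    rw [div_lt_div_iff₀ hN (by positivity)]
    linarith [mul_lt_mul_of_pos_right h hζ]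
  have key := Real.prod_pow_lt_pow_of_esymm_erase_div_choose_lt (s := univ) (d := n - ζ)
    ⟨⟨0, by omega⟩, mem_univ _⟩ (by rwa [hcard]) y (fun i _ ↦ hy i)
    fun i _ ↦ by rw [hcard]; exact hmean i
  rw [esymFin_univ_self]
  rwa [hcard] at key

/-- If `(c/(2·C(n,ζ))) · e_{n−ζ}(y omitting i) < 1` for every `i`, with `n ≥ 2`,
`1 ≤ ζ ≤ n−1` and `c > 0`, then `e_n(y)^{n−ζ} < (2n/(ζc))^n`. -/
theorem stmt_9 (n ζ : ℕ) (hn : 2 ≤ n) (hζ1 : 1 ≤ ζ) (hζ2 : ζ ≤ n - 1)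
    (c : ℝ) (hc : 0 < c) (y : Fin n → ℝ) (hy : ∀ i, 0 < y i)
    (hcone : ∀ i : Fin n,
      c / (2 * (n.choose ζ : ℝ)) * esymFin (Finset.univ.erase i) (n - ζ) y < 1) :
    (esymFin Finset.univ n y) ^ (n - ζ) < (2 * (n : ℝ) / ((ζ : ℝ) * c)) ^ n :=
  stmt_9_general n ζ hζ1 hζ2 c hc y hy hcone
end

section
/- Let n ≥ 2, 1 ≤ ζ ≤ n−1 with 2ζ ≥ n, and c > 0. Let λ_1, …, λ_n > 0 satisfy, for every index i, (c/(2·C(n,ζ))) · e_{n−ζ}(1/λ with index i omitted) < 1. Then for every ζ-element subset I of {1,…,n}, the product ∏_{j ∈ I} λ_j > (c/(2·C(n,ζ)))^{ζ/(n−ζ)}. -/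
open Finset

namespace Finset

variable {α : Type*} [DecidableEq α]

lemma card_filter_powersetCard_mem (s : Finset α) {m : ℕ} (hm : 1 ≤ m) {j : α} (hj : j ∈ s) :
    #{T ∈ s.powersetCard m | j ∈ T} = (#s - 1).choose (m - 1) := by
  simpa using card_filter_powersetCard_subset {j} s m (singleton_subset_iff.2 hj) (by simpa)

lemma prod_powersetCard_prod_s14 {M : Type*} [CommMonoid M] (s : Finset α) {m : ℕ} (hm : 1 ≤ m)
    (f : α → M) :
    ∏ T ∈ s.powersetCard m, ∏ j ∈ T, f j = (∏ j ∈ s, f j) ^ (#s - 1).choose (m - 1) := by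
  rw [prod_comm' (t' := s) (s' := fun j ↦ {T ∈ s.powersetCard m | j ∈ T}), ← prod_pow]
  · exact prod_congr rfl fun j hj ↦ by rw [prod_const, card_filter_powersetCard_mem s hm hj]
  · intro T j
    simp only [mem_filter, mem_powersetCard]
    exact ⟨fun ⟨⟨hTs, hTm⟩, hj⟩ ↦ ⟨⟨⟨hTs, hTm⟩, hj⟩, hTs hj⟩, And.left⟩

end Finset

lemma rpow_div_lt_of_pow_lt_pow {a b : ℝ} {p q : ℕ} (ha : 0 ≤ a) (hb : 0 ≤ b) (hq : q ≠ 0)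
    (h : a ^ p < b ^ q) : a ^ ((p : ℝ) / q) < b :=
  calc a ^ ((p : ℝ) / q) = (a ^ p) ^ (q⁻¹ : ℝ) := by
        rw [div_eq_mul_inv, Real.rpow_mul ha, Real.rpow_natCast]
    _ < (b ^ q) ^ (q⁻¹ : ℝ) := Real.rpow_lt_rpow (by positivity) h (by positivity)
    _ = b := Real.pow_rpow_inv_natCast hb hq

lemma rpow_card_div_lt_prod_of_forall_powersetCard {α : Type*} [DecidableEq α] {s : Finset α}
    {m : ℕ} (hm : 1 ≤ m) (hms : m ≤ #s) {a : ℝ} (ha : 0 < a) {f : α → ℝ}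
    (hf : ∀ j ∈ s, 0 ≤ f j) (h : ∀ T ∈ s.powersetCard m, a < ∏ j ∈ T, f j) :
    a ^ ((#s : ℝ) / m) < ∏ j ∈ s, f j := by
  have hk : (#s - 1).choose (m - 1) ≠ 0 := (Nat.choose_pos (by omega)).ne'
  have hexp : (#s : ℝ) / m = ((#s).choose m : ℕ) / ((#s - 1).choose (m - 1) : ℕ) := by
    have hchoose := Nat.add_one_mul_choose_eq (#s - 1) (m - 1)
    rw [Nat.sub_add_cancel (by omega), Nat.sub_add_cancel hm] at hchoose
    rw [div_eq_div_iff (by positivity) (by positivity)]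
    exact_mod_cast hchoose
  rw [hexp]
  refine rpow_div_lt_of_pow_lt_pow ha.le (prod_nonneg hf) hk ?_
  calc a ^ (#s).choose m = ∏ _T ∈ s.powersetCard m, a := by rw [prod_const, card_powersetCard]
    _ < ∏ T ∈ s.powersetCard m, ∏ j ∈ T, f j :=
        prod_lt_prod_of_nonempty (fun _ _ ↦ ha) h (powersetCard_nonempty.2 hms)
    _ = (∏ j ∈ s, f j) ^ (#s - 1).choose (m - 1) := prod_powersetCard_prod_s14 s hm f

lemma prod_le_esymFin {n k : ℕ} {s T : Finset (Fin n)} (hT : T ∈ s.powersetCard k)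
    {x : Fin n → ℝ} (hx : ∀ i ∈ s, 0 ≤ x i) : ∏ i ∈ T, x i ≤ esymFin s k x :=
  single_le_sum (f := fun t ↦ ∏ i ∈ t, x i)
    (fun _ ht ↦ prod_nonneg fun i hi ↦ hx i ((mem_powersetCard.1 ht).1 hi)) hT

theorem stmt_14_general (n ζ : ℕ) (hζ1 : 1 ≤ ζ) (hζ2 : ζ ≤ n - 1) (hζ3 : n ≤ 2 * ζ)
    (c : ℝ) (hc : 0 < c) (lam : Fin n → ℝ) (hlam : ∀ i, 0 < lam i)
    (hcone : ∀ i : Fin n,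
      c / (2 * (n.choose ζ : ℝ)) *
        esymFin (Finset.univ.erase i) (n - ζ) (fun j => 1 / lam j) < 1) :
    ∀ I ∈ Finset.univ.powersetCard ζ,
      (c / (2 * (n.choose ζ : ℝ))) ^ ((ζ : ℝ) / ((n : ℝ) - ζ)) < ∏ j ∈ I, lam j := by
  intro I hI
  rw [mem_powersetCard_univ] at hI
  set a := c / (2 * (n.choose ζ : ℝ))
  have ha : 0 < a := div_pos hc (by have := Nat.choose_pos (show ζ ≤ n by omega); positivity)
  obtain ⟨i, -, hi⟩ : ∃ i ∈ univ, i ∉ I :=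
    exists_mem_notMem_of_card_lt_card (by rw [hI, card_univ, Fintype.card_fin]; omega)
  have hsubset : ∀ T ∈ I.powersetCard (n - ζ), a < ∏ j ∈ T, lam j := by
    intro T hT
    have hTi : T ∈ (univ.erase i).powersetCard (n - ζ) :=
      powersetCard_mono (fun j hj ↦ mem_erase.2 ⟨ne_of_mem_of_not_mem hj hi, mem_univ j⟩) hT
    have hterm := (mul_le_mul_of_nonneg_left
      (prod_le_esymFin hTi fun j _ ↦ (one_div_pos.2 (hlam j)).le) ha.le).trans_lt (hcone i)
    rwa [prod_div_distrib, prod_const_one, mul_one_div, div_lt_one (prod_pos fun j _ ↦ hlam j)]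
      at hterm
  have := rpow_card_div_lt_prod_of_forall_powersetCard (by omega) (by omega) ha
    (fun j _ ↦ (hlam j).le) hsubset
  rwa [hI, Nat.cast_sub (by omega)] at this

/-- Under the cone condition `(c/(2C(n,ζ)))·e_{n−ζ}(1/λ omitting i) < 1` for all `i`,
with `2ζ ≥ n`, every product of the `λ_j` over a `ζ`-element subset exceeds
`(c/(2C(n,ζ)))^{ζ/(n−ζ)}`. -/
theorem stmt_14 (n ζ : ℕ) (hn : 2 ≤ n) (hζ1 : 1 ≤ ζ) (hζ2 : ζ ≤ n - 1) (hζ3 : n ≤ 2 * ζ)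
    (c : ℝ) (hc : 0 < c) (lam : Fin n → ℝ) (hlam : ∀ i, 0 < lam i)
    (hcone : ∀ i : Fin n,
      c / (2 * (n.choose ζ : ℝ)) *
        esymFin (Finset.univ.erase i) (n - ζ) (fun j => 1 / lam j) < 1) :
    ∀ I ∈ Finset.univ.powersetCard ζ,
      (c / (2 * (n.choose ζ : ℝ))) ^ ((ζ : ℝ) / ((n : ℝ) - ζ)) < ∏ j ∈ I, lam j :=
  stmt_14_general n ζ hζ1 hζ2 hζ3 c hc lam hlam hcone
end
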